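/- Let 1 < p ≤ q be conjugate exponents (1/p + 1/q = 1), and f, g nonnegative measurable with 0 < ‖f‖_p, ‖g‖_q < ∞ and ‖fg‖₁ > 0. For any ε ∈ (0,1), if ‖fg‖₁ > (1-ε) ‖f‖_p ‖g‖_q, then ‖ f^p/‖f‖_p^p − fg/‖fg‖₁ ‖₁ ≤ √(2ε) + ε. -/

import Mathlib

/-!
After normalising `‖f‖_p = ‖g‖_q = 1`, write `f g = u v` with `u = f ^ (p/2)` and
`v = f ^ (1 - p/2) g`. Then `u ^ 2 = f ^ p` and, by weighted AM-GM (this is where `p ≤ 2` enters),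
`v ^ 2 ≤ ((2 - p)/p) f ^ p + (2/q) g ^ q`, so `‖u‖₂ = 1` and `‖v‖₂ ≤ 1`. Hence
`‖u - v‖₂² ≤ 2 - 2 ∫ f g`, and Cauchy–Schwarz gives
`∫ |f ^ p - f g| = ∫ u |u - v| ≤ ‖u - v‖₂ ≤ √(2 (1 - ∫ f g))`.
Replacing `f g` by `f g / ∫ f g` costs `1 - ∫ f g` more in `L¹`.
-/

open MeasureTheory

lemma div_rpow_one_div_rpow {x a p : ℝ} (hx : 0 ≤ x) (ha : 0 ≤ a) (hp : p ≠ 0) :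
    (x / a ^ (1 / p)) ^ p = x ^ p / a := by
  rw [Real.div_rpow hx (by positivity), one_div, Real.rpow_inv_rpow ha hp]

lemma Real.HolderConjugate.two_sub_div_add_two_div {p q : ℝ} (hpq : p.HolderConjugate q) :
    (2 - p) / p + 2 / q = 1 := by
  have := hpq.inv_add_inv_eq_one
  field_simp [hpq.ne_zero, hpq.symm.ne_zero] at this ⊢
  linarith

lemma Real.HolderConjugate.le_two_of_le {p q : ℝ} (hpq : p.HolderConjugate q) (h : p ≤ q) :
    p ≤ 2 := by
  have := hpq.inv_add_inv_eq_one
  have := inv_anti₀ hpq.pos h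
  exact (inv_le_inv₀ two_pos hpq.pos).1 (by linarith)

lemma sq_rpow_one_sub_half_mul_le {p q x y : ℝ} (hpq : p.HolderConjugate q) (hp2 : p ≤ 2)
    (hx : 0 ≤ x) (hy : 0 ≤ y) :
    (x ^ (1 - p / 2) * y) ^ 2 ≤ (2 - p) / p * x ^ p + 2 / q * y ^ q := by
  have hp := hpq.pos
  have hq := hpq.symm.pos
  calc (x ^ (1 - p / 2) * y) ^ 2 = (x ^ p) ^ ((2 - p) / p) * (y ^ q) ^ (2 / q) := by
        rw [← Real.rpow_mul hx, ← Real.rpow_mul hy, mul_div_cancel₀ _ hp.ne',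
          mul_div_cancel₀ _ hq.ne', Real.rpow_two, mul_pow, ← Real.rpow_two,
          ← Real.rpow_mul hx]
        ring_nf
    _ ≤ (2 - p) / p * x ^ p + 2 / q * y ^ q :=
        Real.geom_mean_le_arith_mean2_weighted (div_nonneg (by linarith) hp.le) (by positivity)
          (by positivity) (by positivity) hpq.two_sub_div_add_two_div

section Integrals

variable {Z : Type*} [MeasurableSpace Z] {ν : Measure Z} {f g : Z → ℝ} {p q : ℝ}

lemma integrable_div_rpow_integral_rpow (hf : 0 ≤ f) (hp : p ≠ 0)
    (hintf : Integrable (fun z => f z ^ p) ν) :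
    Integrable (fun z => (f z / (∫ w, f w ^ p ∂ν) ^ (1 / p)) ^ p) ν :=
  (hintf.div_const _).congr <| ae_of_all _ fun z =>
    (div_rpow_one_div_rpow (hf z) (integral_nonneg fun w => Real.rpow_nonneg (hf w) p) hp).symm

lemma integral_div_rpow_integral_rpow (hf : 0 ≤ f) (hp : p ≠ 0)
    (hpos : 0 < ∫ z, f z ^ p ∂ν) :
    ∫ z, (f z / (∫ w, f w ^ p ∂ν) ^ (1 / p)) ^ p ∂ν = 1 := by
  rw [integral_congr_ae (ae_of_all _ fun z => div_rpow_one_div_rpow (hf z) hpos.le hp),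
    integral_div, div_self hpos.ne']

lemma integral_mul_abs_le_sqrt_mul_sqrt {u w : Z → ℝ} (hu0 : 0 ≤ u) (hu : MemLp u 2 ν)
    (hw : MemLp w 2 ν) :
    ∫ z, u z * |w z| ∂ν ≤ √(∫ z, u z ^ 2 ∂ν) * √(∫ z, w z ^ 2 ∂ν) := by
  have := integral_mul_le_Lp_mul_Lq_of_nonneg Real.HolderConjugate.two_two (ae_of_all _ hu0)
    (ae_of_all _ fun z => abs_nonneg (w z)) (by simpa using hu)
    (by rw [ENNReal.ofReal_ofNat]; exact hw.abs)
  simpa [Real.sqrt_eq_rpow, Real.rpow_two, sq_abs] using this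

lemma integral_sub_sq {u v : Z → ℝ} (hu : MemLp u 2 ν) (hv : MemLp v 2 ν) :
    ∫ z, (u z - v z) ^ 2 ∂ν
      = ∫ z, u z ^ 2 ∂ν - 2 * ∫ z, u z * v z ∂ν + ∫ z, v z ^ 2 ∂ν := by
  have huv : Integrable (fun z => 2 * (u z * v z)) ν := (hu.integrable_mul hv).const_mul 2
  have hu2v : Integrable (fun z => u z ^ 2 - 2 * (u z * v z)) ν := hu.integrable_sq.sub huv
  simp_rw [sub_sq, mul_assoc]
  rw [integral_add hu2v hv.integrable_sq, integral_sub hu.integrable_sq huv, integral_const_mul]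

lemma integral_mul_abs_sub_le_sqrt {u v : Z → ℝ} (hu0 : 0 ≤ u) (hu : MemLp u 2 ν)
    (hv : MemLp v 2 ν) (hu1 : ∫ z, u z ^ 2 ∂ν = 1) (hv1 : ∫ z, v z ^ 2 ∂ν ≤ 1) :
    ∫ z, u z * |u z - v z| ∂ν ≤ √(2 * (1 - ∫ z, u z * v z ∂ν)) := by
  calc ∫ z, u z * |u z - v z| ∂ν
      ≤ √(∫ z, u z ^ 2 ∂ν) * √(∫ z, (u z - v z) ^ 2 ∂ν) :=
        integral_mul_abs_le_sqrt_mul_sqrt hu0 hu (hu.sub hv)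
    _ ≤ √(2 * (1 - ∫ z, u z * v z ∂ν)) := by
        rw [hu1, Real.sqrt_one, one_mul, integral_sub_sq hu hv]
        gcongr
        linarith

lemma integral_abs_sub_div_integral_le {h k : Z → ℝ} (hk0 : 0 ≤ k) (hh : Integrable h ν)
    (hk : Integrable k ν) (hkpos : 0 < ∫ z, k z ∂ν) :
    ∫ z, |h z - k z / ∫ w, k w ∂ν| ∂ν
      ≤ ∫ z, |h z - k z| ∂ν + |1 - ∫ z, k z ∂ν| := by
  set T := ∫ w, k w ∂ν
  have hpt : ∀ z, |h z - k z / T| ≤ |h z - k z| + |1 / T - 1| * k z := fun z =>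
    calc |h z - k z / T| = |(h z - k z) + (1 - 1 / T) * k z| := by ring_nf
      _ ≤ |h z - k z| + |(1 - 1 / T) * k z| := abs_add_le _ _
      _ = |h z - k z| + |1 / T - 1| * k z := by
        rw [abs_mul, abs_of_nonneg (hk0 z), abs_sub_comm (1 : ℝ)]
  have hdiff : Integrable (fun z => |h z - k z|) ν := (hh.sub hk).abs
  have hdiv : Integrable (fun z => |h z - k z / T|) ν := (hh.sub (hk.div_const T)).abs
  calc ∫ z, |h z - k z / T| ∂ν ≤ ∫ z, (|h z - k z| + |1 / T - 1| * k z) ∂ν :=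
        integral_mono hdiv (hdiff.add (hk.const_mul _)) hpt
    _ = ∫ z, |h z - k z| ∂ν + |1 - T| := by
        rw [integral_add hdiff (hk.const_mul _), integral_const_mul,
          show (1 : ℝ) - T = (1 / T - 1) * T by field_simp, abs_mul, abs_of_pos hkpos]

lemma integral_mul_le_one_of_integral_rpow_eq_one (hpq : p.HolderConjugate q) (hf : 0 ≤ f)
    (hg : 0 ≤ g) (hintf : Integrable (fun z => f z ^ p) ν)
    (hintg : Integrable (fun z => g z ^ q) ν) (hintfg : Integrable (fun z => f z * g z) ν)
    (hf1 : ∫ z, f z ^ p ∂ν = 1) (hg1 : ∫ z, g z ^ q ∂ν = 1) :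
    ∫ z, f z * g z ∂ν ≤ 1 :=
  calc ∫ z, f z * g z ∂ν ≤ ∫ z, (f z ^ p / p + g z ^ q / q) ∂ν :=
        integral_mono hintfg ((hintf.div_const p).add (hintg.div_const q))
          fun z => Real.young_inequality_of_nonneg (hf z) (hg z) hpq
    _ = 1 := by
        rw [integral_add (hintf.div_const p) (hintg.div_const q), integral_div, integral_div,
          hf1, hg1, one_div, one_div, hpq.inv_add_inv_eq_one]

theorem integral_abs_rpow_sub_mul_le_sqrt (hpq : p.HolderConjugate q) (hp2 : p ≤ 2)
    (hf : 0 ≤ f) (hg : 0 ≤ g) (hmf : Measurable f) (hmg : Measurable g)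
    (hintf : Integrable (fun z => f z ^ p) ν) (hintg : Integrable (fun z => g z ^ q) ν)
    (hf1 : ∫ z, f z ^ p ∂ν = 1) (hg1 : ∫ z, g z ^ q ∂ν = 1) :
    ∫ z, |f z ^ p - f z * g z| ∂ν ≤ √(2 * (1 - ∫ z, f z * g z ∂ν)) := by
  set u : Z → ℝ := fun z => f z ^ (p / 2)
  set v : Z → ℝ := fun z => f z ^ (1 - p / 2) * g z
  have hu_sq : ∀ z, u z ^ 2 = f z ^ p := fun z => by
    rw [← Real.rpow_two, ← Real.rpow_mul (hf z), div_mul_cancel₀ _ two_ne_zero]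
  have huv : ∀ z, u z * v z = f z * g z := fun z => by
    rw [← mul_assoc, ← Real.rpow_add' (hf z) (by norm_num), add_sub_cancel, Real.rpow_one]
  have hbound : Integrable (fun z => (2 - p) / p * f z ^ p + 2 / q * g z ^ q) ν :=
    (hintf.const_mul _).add (hintg.const_mul _)
  have hu : MemLp u 2 ν := (memLp_two_iff_integrable_sq (hmf.pow_const _).aestronglyMeasurable).2
    (hintf.congr (ae_of_all _ fun z => (hu_sq z).symm))
  have hv : MemLp v 2 ν :=
    (memLp_two_iff_integrable_sq ((hmf.pow_const _).mul hmg).aestronglyMeasurable).2 <|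
      hbound.mono' (((hmf.pow_const _).mul hmg).pow_const 2).aestronglyMeasurable <|
        ae_of_all _ fun z => by
          rw [Real.norm_of_nonneg (sq_nonneg _)]
          exact sq_rpow_one_sub_half_mul_le hpq hp2 (hf z) (hg z)
  have hv1 : ∫ z, v z ^ 2 ∂ν ≤ 1 := by
    calc ∫ z, v z ^ 2 ∂ν ≤ ∫ z, ((2 - p) / p * f z ^ p + 2 / q * g z ^ q) ∂ν :=
          integral_mono hv.integrable_sq hbound fun z =>
            sq_rpow_one_sub_half_mul_le hpq hp2 (hf z) (hg z)
      _ = 1 := by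
          rw [integral_add (hintf.const_mul _) (hintg.const_mul _), integral_const_mul,
            integral_const_mul, hf1, hg1, mul_one, mul_one, hpq.two_sub_div_add_two_div]
  calc ∫ z, |f z ^ p - f z * g z| ∂ν = ∫ z, u z * |u z - v z| ∂ν :=
        integral_congr_ae <| ae_of_all _ fun z => by
          beta_reduce
          rw [← hu_sq, ← huv, sq, ← mul_sub, abs_mul,
            abs_of_nonneg (Real.rpow_nonneg (hf z) _)]
    _ ≤ √(2 * (1 - ∫ z, u z * v z ∂ν)) := integral_mul_abs_sub_le_sqrt
        (fun z => Real.rpow_nonneg (hf z) _) hu hv (by simp_rw [hu_sq]; exact hf1) hv1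
    _ = √(2 * (1 - ∫ z, f z * g z ∂ν)) := by simp_rw [huv]

theorem integral_abs_rpow_sub_mul_div_integral_le (hpq : p.HolderConjugate q) (hp2 : p ≤ 2)
    (hf : 0 ≤ f) (hg : 0 ≤ g) (hmf : Measurable f) (hmg : Measurable g)
    (hintf : Integrable (fun z => f z ^ p) ν) (hintg : Integrable (fun z => g z ^ q) ν)
    (hintfg : Integrable (fun z => f z * g z) ν) (hfgpos : 0 < ∫ z, f z * g z ∂ν)
    (hf1 : ∫ z, f z ^ p ∂ν = 1) (hg1 : ∫ z, g z ^ q ∂ν = 1) :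
    ∫ z, |f z ^ p - f z * g z / ∫ w, f w * g w ∂ν| ∂ν
      ≤ √(2 * (1 - ∫ z, f z * g z ∂ν)) + (1 - ∫ z, f z * g z ∂ν) := by
  have hfg1 := integral_mul_le_one_of_integral_rpow_eq_one hpq hf hg hintf hintg hintfg hf1 hg1
  calc ∫ z, |f z ^ p - f z * g z / ∫ w, f w * g w ∂ν| ∂ν
      ≤ ∫ z, |f z ^ p - f z * g z| ∂ν + |1 - ∫ z, f z * g z ∂ν| :=
        integral_abs_sub_div_integral_le (fun z => mul_nonneg (hf z) (hg z)) hintf hintfg hfgpos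
    _ ≤ √(2 * (1 - ∫ z, f z * g z ∂ν)) + (1 - ∫ z, f z * g z ∂ν) := by
        rw [abs_of_nonneg (sub_nonneg.2 hfg1)]
        gcongr
        exact integral_abs_rpow_sub_mul_le_sqrt hpq hp2 hf hg hmf hmg hintf hintg hf1 hg1

end Integrals

theorem holder_stability_theorem_general
    {Z : Type*} [MeasurableSpace Z] (ν : Measure Z)
    (f g : Z → ℝ)
    (hf : ∀ z, 0 ≤ f z) (hg : ∀ z, 0 ≤ g z)
    (hmf : Measurable f) (hmg : Measurable g)
    (p q : ℝ) (hp1 : 1 < p) (hpq : p ≤ q) (hconj : 1 / p + 1 / q = 1)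
    (hintf : Integrable (fun z => f z ^ p) ν)
    (hintg : Integrable (fun z => g z ^ q) ν)
    (hintfg : Integrable (fun z => f z * g z) ν)
    (hfpos : 0 < ∫ z, f z ^ p ∂ν) (hgpos : 0 < ∫ z, g z ^ q ∂ν)
    (hfgpos : 0 < ∫ z, f z * g z ∂ν)
    (ε : ℝ)
    (hgap : ∫ z, f z * g z ∂ν >
      (1 - ε) * ((∫ z, f z ^ p ∂ν) ^ (1 / p) * (∫ z, g z ^ q ∂ν) ^ (1 / q))) :
    ∫ z, |f z ^ p / (∫ w, f w ^ p ∂ν) -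
        f z * g z / (∫ w, f w * g w ∂ν)| ∂ν
      ≤ Real.sqrt (2 * ε) + ε := by
  have hpq' : p.HolderConjugate q :=
    Real.holderConjugate_iff.2 ⟨hp1, by simpa only [one_div] using hconj⟩
  set A := (∫ z, f z ^ p ∂ν) ^ (1 / p)
  set B := (∫ z, g z ^ q ∂ν) ^ (1 / q)
  have hAB : 0 < A * B := by positivity
  set F : Z → ℝ := fun z => f z / A
  set G : Z → ℝ := fun z => g z / B
  have hFG : ∀ z, F z * G z = f z * g z / (A * B) := fun z => div_mul_div_comm _ _ _ _
  have hFG_int : ∫ z, F z * G z ∂ν = (∫ z, f z * g z ∂ν) / (A * B) := by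
    simp_rw [hFG]; exact integral_div _ _
  have hgap' : 1 - ∫ z, F z * G z ∂ν < ε := by
    rw [hFG_int, sub_lt_comm, lt_div_iff₀ hAB]; exact hgap
  calc ∫ z, |f z ^ p / (∫ w, f w ^ p ∂ν) - f z * g z / (∫ w, f w * g w ∂ν)| ∂ν
      = ∫ z, |F z ^ p - F z * G z / ∫ w, F w * G w ∂ν| ∂ν :=
        integral_congr_ae <| ae_of_all _ fun z => by
          beta_reduce
          rw [div_rpow_one_div_rpow (hf z) hfpos.le hpq'.ne_zero, hFG, hFG_int,
            div_div_div_cancel_right₀ hAB.ne']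
    _ ≤ √(2 * (1 - ∫ z, F z * G z ∂ν)) + (1 - ∫ z, F z * G z ∂ν) :=
        integral_abs_rpow_sub_mul_div_integral_le hpq' (hpq'.le_two_of_le hpq)
          (fun z => div_nonneg (hf z) (by positivity)) (fun z => div_nonneg (hg z) (by positivity))
          (hmf.div_const A) (hmg.div_const B)
          (integrable_div_rpow_integral_rpow hf hpq'.ne_zero hintf)
          (integrable_div_rpow_integral_rpow hg hpq'.symm.ne_zero hintg)
          ((hintfg.div_const _).congr (ae_of_all _ fun z => (hFG z).symm))
          (by rw [hFG_int]; positivity)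
          (integral_div_rpow_integral_rpow hf hpq'.ne_zero hfpos)
          (integral_div_rpow_integral_rpow hg hpq'.symm.ne_zero hgpos)
    _ ≤ √(2 * ε) + ε := by gcongr

theorem holder_stability_theorem
    {Z : Type*} [MeasurableSpace Z] (ν : Measure Z)
    (f g : Z → ℝ)
    (hf : ∀ z, 0 ≤ f z) (hg : ∀ z, 0 ≤ g z)
    (hmf : Measurable f) (hmg : Measurable g)
    (p q : ℝ) (hp1 : 1 < p) (hpq : p ≤ q) (hconj : 1 / p + 1 / q = 1)
    (hintf : Integrable (fun z => f z ^ p) ν)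
    (hintg : Integrable (fun z => g z ^ q) ν)
    (hintfg : Integrable (fun z => f z * g z) ν)
    (hfpos : 0 < ∫ z, f z ^ p ∂ν) (hgpos : 0 < ∫ z, g z ^ q ∂ν)
    (hfgpos : 0 < ∫ z, f z * g z ∂ν)
    (ε : ℝ) (hε0 : 0 < ε) (hε1 : ε < 1)
    (hgap : ∫ z, f z * g z ∂ν >
      (1 - ε) * ((∫ z, f z ^ p ∂ν) ^ (1 / p) * (∫ z, g z ^ q ∂ν) ^ (1 / q))) :
    ∫ z, |f z ^ p / (∫ w, f w ^ p ∂ν) -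
        f z * g z / (∫ w, f w * g w ∂ν)| ∂ν
      ≤ Real.sqrt (2 * ε) + ε :=
  holder_stability_theorem_general ν f g hf hg hmf hmg p q hp1 hpq hconj hintf hintg hintfg hfpos
    hgpos hfgpos ε hgap
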